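/- arXiv:1311.6686 — 3 statements merged into one kernel-verified Lean document; each statement's English description precedes it below -/
import Mathlib

section
/- If L and M are n×n matrices over an algebraically closed field with LM = 0 = ML, then pdet(L + M) = pdet(L)·pdet(M). -/
/-!
Since `(X - A) (X - B) = X (X - (A + B))` whenever `A B = 0`, taking determinants gives
`χ_A χ_B = X ^ n χ_{A + B}`. The power of `X` does not change the trailing coefficient, which is
multiplicative over a domain; apply this to `A = -L`, `B = -M`.
-/

open Polynomial

/-- The pseudodeterminant of a square matrix: the last nonzero coefficient of the
unsigned characteristic polynomial `det (t • 1 + L)`; over an algebraically closed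
field this equals the product of the nonzero eigenvalues counted with algebraic
multiplicity. -/
noncomputable def pdet {n : ℕ} {K : Type*} [CommRing K]
    (L : Matrix (Fin n) (Fin n) K) : K :=
  (Matrix.charpoly (-L)).trailingCoeff

theorem Polynomial.trailingCoeff_X_pow_mul {R : Type*} [Semiring R] (k : ℕ) (p : R[X]) :
    (X ^ k * p).trailingCoeff = p.trailingCoeff := by
  rcases eq_or_ne p 0 with rfl | hp
  · simp
  · rw [X_pow_mul, trailingCoeff, natTrailingDegree_mul_X_pow hp, coeff_mul_X_pow, trailingCoeff]

namespace Matrix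

variable {n R : Type*} [Fintype n] [DecidableEq n] [CommRing R]

theorem charmatrix_mul_charmatrix_of_mul_eq_zero {A B : Matrix n n R} (h : A * B = 0) :
    charmatrix A * charmatrix B = (X : R[X]) • charmatrix (A + B) := by
  have hC : (C : R →+* R[X]).mapMatrix A * (C : R →+* R[X]).mapMatrix B = 0 := by
    rw [← map_mul, h, map_zero]
  simp only [charmatrix, map_add, sub_mul, mul_sub, scalar_apply, smul_sub, smul_add, hC,
    ← smul_one_eq_diagonal, Matrix.smul_mul, Matrix.mul_smul, one_mul, mul_one, sub_zero]
  abel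

theorem charpoly_mul_charpoly_of_mul_eq_zero {A B : Matrix n n R} (h : A * B = 0) :
    A.charpoly * B.charpoly = X ^ Fintype.card n * (A + B).charpoly := by
  rw [charpoly, charpoly, ← det_mul, charmatrix_mul_charmatrix_of_mul_eq_zero h, det_smul,
    charpoly]

end Matrix

theorem pdet_add_of_mutually_annihilating_general {n : ℕ} {K : Type*} [Field K]
    (L M : Matrix (Fin n) (Fin n) K) (hLM : L * M = 0) :
    pdet (L + M) = pdet L * pdet M := by
  have key := Matrix.charpoly_mul_charpoly_of_mul_eq_zero (A := -L) (B := -M)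
    (by rw [neg_mul_neg, hLM])
  rw [pdet, pdet, pdet, ← trailingCoeff_mul, key, trailingCoeff_X_pow_mul, neg_add]

/-- If `L` and `M` are mutually annihilating then `pdet (L + M) = pdet L * pdet M`. -/
theorem pdet_add_of_mutually_annihilating {n : ℕ} {K : Type*} [Field K] [IsAlgClosed K]
    (L M : Matrix (Fin n) (Fin n) K) (hLM : L * M = 0) (hML : M * L = 0) :
    pdet (L + M) = pdet L * pdet M :=
  pdet_add_of_mutually_annihilating_general L M hLM
end

section
/- Let ∂ be an n×m matrix over a commutative ring, X = diag(x₁,…,xₙ) and Y = diag(y₁,…,y_m) diagonal matrices of indeterminates. Then det(tI + X∂Y∂ᵗ) = Σ over pairs (I,J) with |I| = |J| of t^{n-|I|}·x^I·y^J·(det ∂_{I,J})², where x^I = Π_{i∈I} x_i and y^J = Π_{j∈J} y_j. -/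
open Polynomial Finset

/-!
Expanding the determinant row by row gives `det (t • 1 + A) = ∑_I t^(n-|I|) det A_{I,I}`.
For `A = X B Y Bᵀ` the diagonal factor `X` pulls out of each principal minor as `x^I`, and the
Cauchy–Binet formula splits `det (B Y Bᵀ)_{I,I} = ∑_{|J|=|I|} det B_{I,J} y^J det B_{I,J}`.

Cauchy–Binet itself: writing each column of `P Q` as a combination of the columns of `P`
gives `det (P Q) = ∑_f (∏_i Q (f i) i) det P_{·,f}` over all maps `f : Fin k → m`. The terms
with `f` non-injective vanish, and each injective `f` is, in a unique way, the increasing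
enumeration of a `k`-subset `J` composed with a permutation `σ`; the signs of the `σ` then
reassemble `det Q_{J,·}`.
-/

/-- The square submatrix of `B` with rows indexed by `I` and columns by `J`
(in increasing order), defined when `I.card = J.card`, and `0` otherwise. -/
noncomputable def minorDet {n m : ℕ} {R : Type*} [CommRing R]
    (B : Matrix (Fin n) (Fin m) R) (I : Finset (Fin n)) (J : Finset (Fin m)) : R :=
  if h : I.card = J.card then
    (B.submatrix (I.orderEmbOfFin rfl) (J.orderEmbOfFin h.symm)).det
  else 0

namespace Matrix

variable {R : Type*} [CommRing R]

theorem det_diagonal_add {n : Type*} [Fintype n] [DecidableEq n] (d : n → R)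
    (A : Matrix n n R) :
    det (diagonal d + A)
      = ∑ s : Finset n, (∏ i ∈ sᶜ, d i) * det (A.submatrix ((↑) : s → n) (↑)) := by
  rw [add_comm]
  change detRowAlternating (A.row + (diagonal d).row) = _
  rw [(detRowAlternating : (n → R) [⋀^n]→ₗ[R] R).map_add_univ]
  refine Fintype.sum_congr _ _ fun s => ?_
  have hrows : s.piecewise A.row (diagonal d).row = fun i =>
      (if i ∈ sᶜ then d i else 1) • s.piecewise A.row (1 : Matrix n n R).row i := by
    ext i j
    by_cases hi : i ∈ s <;> simp [hi, Finset.piecewise, row, diagonal, one_apply]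
  rw [hrows, AlternatingMap.map_smul_univ, prod_ite_mem, univ_inter, smul_eq_mul]
  exact congrArg _ (det_piecewise_one_eq_submatrix_det A s)

theorem det_smul_one_add {n : Type*} [Fintype n] [DecidableEq n] (t : R) (A : Matrix n n R) :
    det (t • 1 + A) = ∑ s : Finset n,
      t ^ (Fintype.card n - s.card) * det (A.submatrix ((↑) : s → n) (↑)) := by
  simp only [smul_one_eq_diagonal, det_diagonal_add, prod_const, card_compl]

theorem det_mul_eq_sum_prod_mul_det_submatrix {l m : Type*} [Fintype l] [DecidableEq l]
    [Fintype m] (P : Matrix l m R) (Q : Matrix m l R) :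
    det (P * Q) = ∑ f : l → m, (∏ i, Q (f i) i) * det (P.submatrix id f) := by
  simp only [det_apply', mul_apply, prod_univ_sum, mul_sum, Fintype.piFinset_univ,
    submatrix_apply, id, prod_mul_distrib]
  rw [sum_comm]
  refine Fintype.sum_congr _ _ fun f => Fintype.sum_congr _ _ fun σ => ?_
  ring

theorem det_submatrix_eq_zero_of_not_injective {l m : Type*} [Fintype l] [DecidableEq l]
    (P : Matrix l m R) {f : l → m} (hf : ¬Function.Injective f) :
    det (P.submatrix id f) = 0 := by
  obtain ⟨i, j, hfij, hij⟩ : ∃ i j, f i = f j ∧ i ≠ j := by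
    simpa [Function.Injective] using hf
  exact det_zero_of_column_eq hij fun r => by simp [hfij]

theorem exists_perm_eq_orderEmbOfFin_comp {k : ℕ} {m : Type*} [LinearOrder m]
    {f : Fin k → m} (hf : Function.Injective f) (J : Finset m) (hJ : J.card = k)
    (hrange : Set.range f = J) : ∃ σ : Equiv.Perm (Fin k), f = J.orderEmbOfFin hJ ∘ σ := by
  have hrange' : Set.range f = Set.range (J.orderEmbOfFin hJ) := by
    rw [hrange, range_orderEmbOfFin]
  refine ⟨(Equiv.ofInjective f hf).trans ((Equiv.setCongr hrange').trans
    (Equiv.ofInjective _ (J.orderEmbOfFin hJ).injective).symm), funext fun i => ?_⟩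
  simp [Equiv.apply_ofInjective_symm]

theorem det_mul_eq_sum_det_mul_det {k : ℕ} {m : Type*} [Fintype m] [LinearOrder m]
    (P : Matrix (Fin k) m R) (Q : Matrix m (Fin k) R) :
    det (P * Q) = ∑ J : {J : Finset m // J.card = k},
      det (P.submatrix id (J.1.orderEmbOfFin J.2))
        * det (Q.submatrix (J.1.orderEmbOfFin J.2) id) := by
  let e : {J : Finset m // J.card = k} × Equiv.Perm (Fin k) → Fin k → m :=
    fun p => p.1.1.orderEmbOfFin p.1.2 ∘ p.2
  have he_inj : Function.Injective e := by
    rintro ⟨⟨J, hJ⟩, σ⟩ ⟨⟨J', hJ'⟩, σ'⟩ h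
    have hJJ' : J = J' := by
      simpa [e, EquivLike.range_comp] using congrArg Set.range h
    subst hJJ'
    have hσ : σ = σ' := Equiv.ext fun i => (J.orderEmbOfFin hJ).injective (congrFun h i)
    rw [hσ]
  have hoff_range : ∀ f ∉ Set.range e, (∏ i, Q (f i) i) * det (P.submatrix id f) = 0 := by
    intro f hf
    rw [det_submatrix_eq_zero_of_not_injective P, mul_zero]
    intro hinj
    have hcard : (univ.image f).card = k := by simp [card_image_of_injective _ hinj]
    obtain ⟨σ, hσ⟩ := exists_perm_eq_orderEmbOfFin_comp hinj _ hcard (by simp)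
    exact hf ⟨(⟨_, hcard⟩, σ), hσ.symm⟩
  calc det (P * Q) = ∑ f : Fin k → m, (∏ i, Q (f i) i) * det (P.submatrix id f) :=
        det_mul_eq_sum_prod_mul_det_submatrix P Q
    _ = ∑ p, (∏ i, Q (e p i) i) * det (P.submatrix id (e p)) :=
        (Fintype.sum_of_injective e he_inj _ _ hoff_range fun _ => rfl).symm
    _ = _ := by
      rw [Fintype.sum_prod_type]
      refine Fintype.sum_congr _ _ fun J => ?_
      simp only [e, det_apply' (Q.submatrix _ _), mul_sum]
      refine Fintype.sum_congr _ _ fun σ => ?_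
      have hperm : P.submatrix id (J.1.orderEmbOfFin J.2 ∘ σ)
          = (P.submatrix id (J.1.orderEmbOfFin J.2)).submatrix id σ := rfl
      rw [hperm, det_permute']
      simp only [submatrix_apply, Function.comp_apply, id]
      ring

end Matrix

open Matrix

section minorDet

variable {n m : ℕ} {R : Type*} [CommRing R]

theorem minorDet_of_card_eq {k : ℕ}
    (A : Matrix (Fin n) (Fin m) R) {I : Finset (Fin n)} {J : Finset (Fin m)} (hI : I.card = k)
    (hJ : J.card = k) :
    minorDet A I J = det (A.submatrix (I.orderEmbOfFin hI) (J.orderEmbOfFin hJ)) := by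
  subst hI
  exact dif_pos hJ.symm

theorem minorDet_of_card_ne (A : Matrix (Fin n) (Fin m) R)
    {I : Finset (Fin n)} {J : Finset (Fin m)} (h : I.card ≠ J.card) : minorDet A I J = 0 :=
  dif_neg h

theorem minorDet_self (A : Matrix (Fin n) (Fin n) R)
    (I : Finset (Fin n)) : minorDet A I I = det (A.submatrix ((↑) : I → Fin n) (↑)) := by
  rw [minorDet_of_card_eq A rfl rfl, ← det_submatrix_equiv_self (I.orderIsoOfFin rfl).toEquiv]
  rfl

theorem minorDet_transpose (A : Matrix (Fin n) (Fin m) R)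
    (I : Finset (Fin n)) (J : Finset (Fin m)) : minorDet Aᵀ J I = minorDet A I J := by
  by_cases h : I.card = J.card
  · rw [minorDet_of_card_eq _ h.symm rfl, minorDet_of_card_eq _ rfl h.symm,
      ← transpose_submatrix, det_transpose]
  · rw [minorDet_of_card_ne _ (Ne.symm h), minorDet_of_card_ne _ h]

theorem minorDet_diagonal_mul (d : Fin n → R)
    (A : Matrix (Fin n) (Fin m) R) (I : Finset (Fin n)) (J : Finset (Fin m)) :
    minorDet (diagonal d * A) I J = (∏ i ∈ I, d i) * minorDet A I J := by
  by_cases h : I.card = J.card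
  · rw [minorDet_of_card_eq _ rfl h.symm, minorDet_of_card_eq _ rfl h.symm]
    have hdiag : (diagonal d * A).submatrix (I.orderEmbOfFin rfl) (J.orderEmbOfFin h.symm)
        = diagonal (d ∘ I.orderEmbOfFin rfl)
          * A.submatrix (I.orderEmbOfFin rfl) (J.orderEmbOfFin h.symm) := by
      ext i j
      simp [diagonal_mul]
    rw [hdiag, det_mul, det_diagonal, ← prod_coe_sort I]
    exact congrArg (· * _) ((I.orderIsoOfFin rfl).toEquiv.prod_comp (fun i : I => d i))
  · rw [minorDet_of_card_ne _ h, minorDet_of_card_ne _ h, mul_zero]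

theorem minorDet_mul {p : ℕ} (P : Matrix (Fin n) (Fin m) R)
    (Q : Matrix (Fin m) (Fin p) R) (I : Finset (Fin n)) (K : Finset (Fin p)) :
    minorDet (P * Q) I K = ∑ J ∈ univ.filter (fun J : Finset (Fin m) => J.card = I.card),
      minorDet P I J * minorDet Q J K := by
  by_cases hIK : I.card = K.card
  · rw [minorDet_of_card_eq _ rfl hIK.symm, submatrix_mul _ _ _ id _ Function.bijective_id,
      det_mul_eq_sum_det_mul_det, sum_subtype (p := fun J : Finset (Fin m) => J.card = I.card)
        (univ.filter fun J : Finset (Fin m) => J.card = I.card) (fun J => by simp)]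
    refine Fintype.sum_congr _ _ fun J => ?_
    rw [minorDet_of_card_eq P rfl J.2, minorDet_of_card_eq Q J.2 hIK.symm]
    rfl
  · rw [minorDet_of_card_ne _ hIK]
    refine (sum_eq_zero fun J hJ => ?_).symm
    rw [minorDet_of_card_ne Q fun hJK => hIK ((mem_filter.mp hJ).2.symm.trans hJK), mul_zero]

end minorDet

/-- The weighted principal-minor / Cauchy–Binet expansion: with `X = diag x` and
`Y = diag y`,
`det (t•1 + XBYBᵗ) = Σ_{|I|=|J|} t^(n-|I|) x^I y^J (det B_{I,J})²`.
(Stated for arbitrary weights in an arbitrary commutative ring, which is equivalent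
to the identity of polynomials in indeterminates `x`, `y`.) -/
theorem weighted_charpoly_expansion {n m : ℕ} {R : Type*} [CommRing R]
    (B : Matrix (Fin n) (Fin m) R) (x : Fin n → R) (y : Fin m → R) :
    ((Polynomial.X : R[X]) • (1 : Matrix (Fin n) (Fin n) R[X])
        + (Matrix.diagonal x * B * Matrix.diagonal y * B.transpose).map Polynomial.C).det
    = ∑ I : Finset (Fin n),
        ∑ J ∈ Finset.univ.filter (fun J : Finset (Fin m) => J.card = I.card),
          Polynomial.X ^ (n - I.card)
            * Polynomial.C ((∏ i ∈ I, x i) * (∏ j ∈ J, y j) * (minorDet B I J) ^ 2) := by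
  set M := diagonal x * B * diagonal y * Bᵀ
  have hminor (I : Finset (Fin n)) :
      minorDet M I I = ∑ J ∈ univ.filter (fun J => J.card = I.card),
        (∏ i ∈ I, x i) * (∏ j ∈ J, y j) * minorDet B I J ^ 2 := by
    rw [show M = diagonal x * (B * (diagonal y * Bᵀ)) by simp only [M, Matrix.mul_assoc],
      minorDet_diagonal_mul, minorDet_mul, mul_sum]
    refine sum_congr rfl fun J _ => ?_
    rw [minorDet_diagonal_mul, minorDet_transpose]
    ring
  rw [det_smul_one_add, Fintype.card_fin]
  refine Fintype.sum_congr _ _ fun I => ?_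
  rw [submatrix_map, ← RingHom.mapMatrix_apply, ← RingHom.map_det, ← minorDet_self, hminor,
    map_sum, mul_sum]
end

section
/- Let ∂ ∈ ℝ^{n×n} with ∂² = 0. Then pdet(∂ + ∂ᵗ)² = pdet(∂∂ᵗ)², i.e., pdet(∂+∂ᵗ) = ± pdet(∂∂ᵗ). -/
open Polynomial

/-!
Since `pdet L` is the leading coefficient of `charpolyRev (-L) = det (1 + X • L)`, it is
multiplicative on pairs with `A * B = 0` and invariant under `A * B ↦ B * A`. For the Dirac
operator `D = M + Mᵀ` this gives
`pdet (D * D) = pdet (M * Mᵀ) * pdet (Mᵀ * M) = pdet (M * Mᵀ) ^ 2`.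
On the other hand `det (1 - X • L) * det (1 + X • L) = det (1 - X ^ 2 • L ^ 2)` shows
`pdet L ^ 2 = ± pdet (L * L)`; over `ℝ` the sign `-1` is only possible when both sides vanish.
-/

namespace Matrix

variable {ι κ R : Type*} [Fintype ι] [DecidableEq ι] [Fintype κ] [DecidableEq κ] [CommRing R]

theorem charpolyRev_mul_comm (A : Matrix ι κ R) (B : Matrix κ ι R) :
    charpolyRev (A * B) = charpolyRev (B * A) := by
  rw [charpolyRev, charpolyRev, Matrix.map_mul, Matrix.map_mul, ← smul_mul,
    det_one_sub_mul_comm, Matrix.mul_smul]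

theorem charpolyRev_add_of_mul_eq_zero {A B : Matrix ι ι R} (h : A * B = 0) :
    charpolyRev (A + B) = charpolyRev A * charpolyRev B := by
  rw [charpolyRev, charpolyRev, charpolyRev, ← det_mul]
  congr 1
  rw [sub_mul, mul_sub, mul_sub, one_mul, mul_one, one_mul, smul_mul_smul, ← Matrix.map_mul, h,
    Matrix.map_zero _ (map_zero C), smul_zero, Matrix.map_add _ (map_add C), smul_add]
  abel

theorem charpolyRev_neg (A : Matrix ι ι R) :
    charpolyRev (-A) = (charpolyRev A).comp (-X) := by
  rw [charpolyRev, charpolyRev, comp_eq_aeval, AlgHom.map_det]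
  congr 1
  ext i j
  simp [one_apply, apply_ite]

theorem charpolyRev_mul_charpolyRev_neg (A : Matrix ι ι R) :
    charpolyRev A * charpolyRev (-A) = expand R 2 (charpolyRev (A * A)) := by
  have hsq : (1 - (X : R[X]) • A.map C) * (1 - (X : R[X]) • (-A).map C)
      = 1 - (X ^ 2 : R[X]) • (A * A).map C := by
    rw [Matrix.map_neg _ (map_neg C), smul_neg, sub_neg_eq_add, mul_add, sub_mul, sub_mul,
      one_mul, one_mul, mul_one, smul_mul_smul, Matrix.map_mul, sq]
    abel
  rw [charpolyRev, charpolyRev, charpolyRev, ← det_mul, hsq, AlgHom.map_det]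
  congr 1
  ext i j
  simp only [AlgHom.mapMatrix_apply, map_apply, sub_apply, one_apply, smul_apply, smul_eq_mul,
    map_sub, map_mul, expand_X, expand_C, map_one]

end Matrix

section Pdet

variable {n : ℕ} {K : Type*} [CommRing K]

theorem pdet_eq_leadingCoeff_charpolyRev_neg (L : Matrix (Fin n) (Fin n) K) :
    pdet L = (-L).charpolyRev.leadingCoeff := by
  rw [pdet, ← reverse_leadingCoeff, Matrix.reverse_charpoly]

theorem pdet_mul_comm (A B : Matrix (Fin n) (Fin n) K) : pdet (A * B) = pdet (B * A) := by
  rw [pdet_eq_leadingCoeff_charpolyRev_neg, pdet_eq_leadingCoeff_charpolyRev_neg,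
    ← Matrix.neg_mul, Matrix.charpolyRev_mul_comm, Matrix.mul_neg, ← Matrix.neg_mul, Matrix.charpolyRev_mul_comm]

theorem pdet_neg (L : Matrix (Fin n) (Fin n) K) :
    ∃ k : ℕ, pdet (-L) = (-1) ^ k * pdet L := by
  refine ⟨(-L).charpolyRev.natDegree, ?_⟩
  rw [pdet_eq_leadingCoeff_charpolyRev_neg, pdet_eq_leadingCoeff_charpolyRev_neg, neg_neg,
    ← neg_neg L, Matrix.charpolyRev_neg (-L), comp_neg_X_leadingCoeff_eq, neg_neg]

variable [NoZeroDivisors K]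

theorem pdet_add_of_mul_eq_zero {A B : Matrix (Fin n) (Fin n) K} (h : A * B = 0) :
    pdet (A + B) = pdet A * pdet B := by
  simp only [pdet_eq_leadingCoeff_charpolyRev_neg, neg_add,
    Matrix.charpolyRev_add_of_mul_eq_zero (by rw [neg_mul_neg, h] : -A * -B = 0),
    leadingCoeff_mul]

theorem pdet_mul_pdet_neg (L : Matrix (Fin n) (Fin n) K) :
    pdet L * pdet (-L) = pdet (-(L * L)) := by
  rw [pdet_eq_leadingCoeff_charpolyRev_neg, pdet_eq_leadingCoeff_charpolyRev_neg,
    pdet_eq_leadingCoeff_charpolyRev_neg, ← leadingCoeff_mul, mul_comm, neg_neg,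
    Matrix.charpolyRev_mul_charpolyRev_neg, neg_neg, leadingCoeff_expand two_pos]

theorem pdet_sq_eq_neg_one_pow_mul_pdet_mul_self (L : Matrix (Fin n) (Fin n) K) :
    ∃ k : ℕ, pdet L ^ 2 = (-1) ^ k * pdet (L * L) := by
  obtain ⟨a, ha⟩ := pdet_neg L
  obtain ⟨b, hb⟩ := pdet_neg (L * L)
  refine ⟨a + b, ?_⟩
  have key : (-1) ^ a * pdet L ^ 2 = (-1) ^ b * pdet (L * L) := by
    rw [← hb, ← pdet_mul_pdet_neg, ha]; ring
  calc pdet L ^ 2 = (-1) ^ a * ((-1) ^ a * pdet L ^ 2) := by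
        rw [← mul_assoc, ← pow_add, Even.neg_one_pow ⟨a, rfl⟩, one_mul]
    _ = (-1) ^ (a + b) * pdet (L * L) := by rw [key, pow_add, mul_assoc]

end Pdet

/-- If `∂² = 0` then `pdet (∂ + ∂ᵗ)² = pdet (∂∂ᵗ)²`, i.e.
`pdet (∂ + ∂ᵗ) = ± pdet (∂∂ᵗ)`. -/
theorem pdet_dirac_sq_eq_pdet_laplacian_sq {n : ℕ}
    (M : Matrix (Fin n) (Fin n) ℝ) (h : M * M = 0) :
    (pdet (M + M.transpose)) ^ 2 = (pdet (M * M.transpose)) ^ 2 := by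
  have ht : M.transpose * M.transpose = 0 := by
    rw [← Matrix.transpose_mul, h, Matrix.transpose_zero]
  have hsq : (M + M.transpose) * (M + M.transpose) = M * M.transpose + M.transpose * M := by
    rw [add_mul, mul_add, mul_add, h, ht, zero_add, add_zero]
  have horth : M * M.transpose * (M.transpose * M) = 0 := by
    rw [Matrix.mul_assoc, ← Matrix.mul_assoc M.transpose, ht, Matrix.zero_mul, Matrix.mul_zero]
  have hlap : pdet ((M + M.transpose) * (M + M.transpose)) = pdet (M * M.transpose) ^ 2 := by
    rw [hsq, pdet_add_of_mul_eq_zero horth, pdet_mul_comm M.transpose, sq]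
  obtain ⟨k, hk⟩ := pdet_sq_eq_neg_one_pow_mul_pdet_mul_self (M + M.transpose)
  rw [hlap] at hk
  rcases neg_one_pow_eq_or ℝ k with hs | hs <;> rw [hs] at hk
  · rw [hk, one_mul]
  · nlinarith [sq_nonneg (pdet (M + M.transpose)), sq_nonneg (pdet (M * M.transpose))]
end
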